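/- Let s ≥ 2 and a ≥ 2 be integers, let N ∈ ℕ, and let a′ ∈ ℕ with a′ < a. Then for every ξ ∈ ℤ, |𝔄(ξ; N, s, a)| ≤ s^{a−a′}/N + ∏_{k=a′+1}^{a} |g(ξ, k; s, {0,1,…,s−1})|. -/

import Mathlib

open Finset

/-- `e(y) = exp(-2πi y)`. -/
noncomputable def eneg (y : ℝ) : ℂ := Complex.exp (-(2 * Real.pi * Complex.I * (y : ℂ)))

/-- `1̂(θ) = ∫₀¹ e(xθ) dx`. -/
noncomputable def oneHat (θ : ℝ) : ℂ := ∫ x in (0:ℝ)..1, eneg (x * θ)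

/-- The `j`-th base-`s` digit of the natural number `n`. -/
def digitOf (s n j : ℕ) : ℕ := n / s ^ j % s

/-- `𝔄(ξ; N, s, a) = N⁻¹ Σ_{k<N} e(ξ k s^{-a})`. -/
noncomputable def Afun (N s a : ℕ) (ξ : ℤ) : ℂ :=
  (N : ℂ)⁻¹ * ∑ k ∈ Finset.range N, eneg ((ξ : ℝ) * k / (s : ℝ) ^ a)

/-- `ℭ(ξ) = s^{a-b} Σ_{ℓ < s^{b-a}} e(ξ ℓ s^{-b})`. -/
noncomputable def Cfun (s a b : ℕ) (ξ : ℤ) : ℂ :=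
  (((s : ℝ) ^ a / (s : ℝ) ^ b : ℝ) : ℂ) *
    ∑ ℓ ∈ Finset.range (s ^ (b - a)), eneg ((ξ : ℝ) * ℓ / (s : ℝ) ^ b)

/-- `𝕃*`: the set of `ℓ < s^{b-a}` all of whose `b-a` base-`s` digits lie in `D`. -/
def Lstar (s a b : ℕ) (D : Finset ℕ) : Finset ℕ :=
  (Finset.range (s ^ (b - a))).filter fun ℓ => ∀ j < b - a, digitOf s ℓ j ∈ D

/-- `𝔅*(ξ) = r^{a-b} Σ_{ℓ ∈ 𝕃*} e(ξ ℓ s^{-b})`, where `r = #D`. -/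
noncomputable def Bstar (s a b : ℕ) (D : Finset ℕ) (ξ : ℤ) : ℂ :=
  (((D.card : ℝ) ^ a / (D.card : ℝ) ^ b : ℝ) : ℂ) *
    ∑ ℓ ∈ Lstar s a b D, eneg ((ξ : ℝ) * ℓ / (s : ℝ) ^ b)

/-- `g(ξ, k; s, 𝒜) = (#𝒜)⁻¹ Σ_{d ∈ 𝒜} e(ξ d s^{-k})`. -/
noncomputable def gfun (s : ℕ) (A : Finset ℕ) (ξ : ℤ) (k : ℕ) : ℂ :=
  (A.card : ℂ)⁻¹ * ∑ d ∈ A, eneg ((ξ : ℝ) * d / (s : ℝ) ^ k)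

open Finset

/-!
Write `M = s^(a-a')` and cut `range N` into `⌊N/M⌋` blocks of length `M` plus fewer than `M`
leftover terms. Each block is a unimodular multiple of `S = Σ_{ℓ<M} e(ξℓ/s^a)`, so
`N |𝔄| ≤ (N/M) |S| + M`. Expanding `ℓ` in base `s`, `S/M` factors as the product of the digit sums
`g(ξ, k; s, {0,…,s-1})` for `a' < k ≤ a`.
-/

lemma eneg_add (x y : ℝ) : eneg (x + y) = eneg x * eneg y := by
  rw [eneg, eneg, eneg, ← Complex.exp_add]
  push_cast
  ring_nf

lemma norm_eneg (x : ℝ) : ‖eneg x‖ = 1 := by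
  simp [eneg, Complex.norm_exp]

lemma sum_range_mul_eq_sum_sum {M : Type*} [AddCommMonoid M] (f : ℕ → M) (m n : ℕ) :
    ∑ k ∈ range (m * n), f k = ∑ i ∈ range m, ∑ j ∈ range n, f (i * n + j) := by
  induction m with
  | zero => simp
  | succ m ih => rw [Nat.succ_mul, sum_range_add, ih, sum_range_succ]

lemma sum_range_mul_eneg (θ : ℝ) (q M : ℕ) :
    ∑ k ∈ range (q * M), eneg (θ * k)
      = (∑ i ∈ range q, eneg (θ * (i * M))) * ∑ j ∈ range M, eneg (θ * j) := by
  rw [sum_range_mul_eq_sum_sum, sum_mul]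
  refine sum_congr rfl fun i _ => ?_
  rw [mul_sum]
  refine sum_congr rfl fun j _ => ?_
  rw [← eneg_add]
  push_cast
  ring_nf

lemma norm_sum_range_eneg_le (θ : ℝ) (N M : ℕ) :
    ‖∑ k ∈ range N, eneg (θ * k)‖ ≤ (N / M : ℕ) * ‖∑ j ∈ range M, eneg (θ * j)‖ + (N % M : ℕ) := by
  have h_blocks : ‖∑ i ∈ range (N / M), eneg (θ * (i * M))‖ ≤ (N / M : ℕ) := by
    simpa [norm_eneg] using norm_sum_le (range (N / M)) fun i : ℕ => eneg (θ * (i * M))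
  have h_tail : ‖∑ k ∈ range (N % M), eneg (θ * ↑(N / M * M + k))‖ ≤ (N % M : ℕ) := by
    simpa [norm_eneg] using
      norm_sum_le (range (N % M)) fun k : ℕ => eneg (θ * ↑(N / M * M + k))
  calc ‖∑ k ∈ range N, eneg (θ * k)‖
      = ‖(∑ i ∈ range (N / M), eneg (θ * (i * M))) * (∑ j ∈ range M, eneg (θ * j))
          + ∑ k ∈ range (N % M), eneg (θ * ↑(N / M * M + k))‖ := by
        rw [← sum_range_mul_eneg, ← sum_range_add, Nat.div_add_mod']
    _ ≤ _ := by
        grw [norm_add_le, norm_mul, h_blocks, h_tail]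

/-- Base-`s` expansion `ℓ = Σ_{j<m} d_j s^j` of the integers `ℓ < s^m`. -/
lemma sum_range_pow_eneg (θ : ℝ) (s m : ℕ) :
    ∑ ℓ ∈ range (s ^ m), eneg (θ * ℓ) = ∏ j ∈ range m, ∑ d ∈ range s, eneg (θ * (s ^ j * d)) := by
  induction m with
  | zero => simp [eneg]
  | succ m ih =>
    rw [pow_succ', sum_range_mul_eneg, ih, prod_range_succ, mul_comm]
    congr 2 with d
    push_cast
    ring_nf

lemma prod_gfun_range_eq_sum_range_pow (s a a' : ℕ) (hs : s ≠ 0) (ξ : ℤ) :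
    ∏ k ∈ Icc (a' + 1) a, gfun s (range s) ξ k
      = ((s : ℂ) ^ (a - a'))⁻¹ * ∑ ℓ ∈ range (s ^ (a - a')), eneg (ξ / (s : ℝ) ^ a * ℓ) := by
  rw [sum_range_pow_eneg, mul_comm, ← inv_pow, pow_eq_prod_const (s : ℂ)⁻¹, ← prod_mul_distrib]
  refine prod_nbij' (fun k => a - k) (fun j => a - j) ?_ ?_ ?_ ?_ ?_
  · intro k hk; simp only [mem_Icc, mem_range] at hk ⊢; omega
  · intro j hj; simp only [mem_Icc, mem_range] at hj ⊢; omega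
  · intro k hk; simp only [mem_Icc] at hk; omega
  · intro j hj; simp only [mem_range] at hj; omega
  · intro k hk
    rw [mem_Icc] at hk
    rw [gfun, card_range, mul_comm]
    congr 1
    refine sum_congr rfl fun d _ => congr_arg eneg ?_
    have hsa : (s : ℝ) ^ a = (s : ℝ) ^ (a - (a - k)) * (s : ℝ) ^ (a - k) := by
      rw [← pow_add]; congr 1; omega
    rw [hsa, Nat.sub_sub_self hk.2]
    field_simp

theorem Afun_digit_product_estimate_general (s a N a' : ℕ)
    (hs : 2 ≤ s) (ξ : ℤ) :
    ‖Afun N s a ξ‖ ≤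
      (s : ℝ) ^ (a - a') / N +
        ∏ k ∈ Finset.Icc (a' + 1) a, ‖gfun s (Finset.range s) ξ k‖ := by
  set M := s ^ (a - a')
  set θ : ℝ := ξ / (s : ℝ) ^ a
  set S := ∑ ℓ ∈ range M, eneg (θ * ℓ)
  have hM : (0 : ℝ) < M := by positivity
  have hA : ‖Afun N s a ξ‖ = ‖∑ k ∈ range N, eneg (θ * k)‖ / N := by
    rw [Afun, norm_mul, norm_inv, Complex.norm_natCast, inv_mul_eq_div]
    congr 3 with k
    rw [mul_div_right_comm]
  have hg : ∏ k ∈ Icc (a' + 1) a, ‖gfun s (range s) ξ k‖ = ‖S‖ / M := by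
    rw [← norm_prod, prod_gfun_range_eq_sum_range_pow s a a' (by omega), norm_mul, norm_inv, norm_pow,
      Complex.norm_natCast, inv_mul_eq_div, Nat.cast_pow]
  have h_full_blocks : ((N / M : ℕ) : ℝ) * M ≤ N := by exact_mod_cast Nat.div_mul_le_self N M
  have h_tail : ((N % M : ℕ) : ℝ) ≤ M := by exact_mod_cast (Nat.mod_lt N (by exact_mod_cast hM)).le
  rw [hA, hg, add_comm]
  calc ‖∑ k ∈ range N, eneg (θ * k)‖ / N
      ≤ ((N / M : ℕ) * ‖S‖ + (N % M : ℕ)) / N := by gcongr; exact norm_sum_range_eneg_le θ N M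
    _ = (N / M : ℕ) * M / N * (‖S‖ / M) + (N % M : ℕ) / N := by field_simp
    _ ≤ 1 * (‖S‖ / M) + M / N := by
        gcongr
        exact div_le_one_of_le₀ h_full_blocks (Nat.cast_nonneg N)
    _ = ‖S‖ / M + (s : ℝ) ^ (a - a') / N := by simp only [M, one_mul, Nat.cast_pow]

/-- Lemma 11.3 (Pramanik–Zhang): for any `1 ≤ a′ < a`,
`|𝔄(ξ; N, s, a)| ≤ s^{a−a′}/N + ∏_{k=a′+1}^{a} |g(ξ, k; s, ℤ_s)|`. -/
theorem Afun_digit_product_estimate (s a N a' : ℕ)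
    (hs : 2 ≤ s) (ha : 2 ≤ a) (hN : 0 < N) (ha'1 : 1 ≤ a') (ha' : a' < a) (ξ : ℤ) :
    ‖Afun N s a ξ‖ ≤
      (s : ℝ) ^ (a - a') / N +
        ∏ k ∈ Finset.Icc (a' + 1) a, ‖gfun s (Finset.range s) ξ k‖ :=
  Afun_digit_product_estimate_general s a N a' hs ξ
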